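/- If (c,≺) is a focussed Pauli flow for a labelled open graph (G,I,O,λ) in which every non-output is measured in a Pauli basis (λ(v) ∈ {X,Y,Z} for all v ∈ O̅), then (c, ∅) — the same correction function together with the empty strict partial order — is also a (focussed) Pauli flow for (G,I,O,λ). -/
import Mathlib


inductive MLabel | X | Y | Z | XY | XZ | YZ
deriving DecidableEq

open Finset

variable {V : Type} [Fintype V] [DecidableEq V]

/-- The odd neighbourhood of a set of vertices. -/
def Odds (G : SimpleGraph V) [DecidableRel G.Adj] (A : Finset V) : Finset V :=
  Finset.univ.filter fun v => Odd (A ∩ G.neighborFinset v).card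

/-- Pauli flow conditions (P1)-(P9) for a labelled open graph. -/
structure PauliFlow (G : SimpleGraph V) [DecidableRel G.Adj]
    (I O : Finset V) (lam : V → MLabel) (c : V → Finset V) (prec : V → V → Prop) : Prop where
  irrefl : ∀ u, ¬ prec u u
  trans : ∀ u v w, prec u v → prec v w → prec u w
  csub : ∀ u, u ∉ O → ∀ v ∈ c u, v ∉ I
  P1 : ∀ u, u ∉ O → ∀ v ∈ c u, v ∉ O → u ≠ v →
      lam v ≠ MLabel.X → lam v ≠ MLabel.Y → prec u v
  P2 : ∀ u, u ∉ O → ∀ v ∈ Odds G (c u), v ∉ O → u ≠ v →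
      lam v ≠ MLabel.Y → lam v ≠ MLabel.Z → prec u v
  P3 : ∀ u, u ∉ O → ∀ v, v ∉ O → ¬ prec u v → u ≠ v → lam v = MLabel.Y →
      (v ∈ c u ↔ v ∈ Odds G (c u))
  P4 : ∀ u, u ∉ O → lam u = MLabel.XY → u ∉ c u ∧ u ∈ Odds G (c u)
  P5 : ∀ u, u ∉ O → lam u = MLabel.XZ → u ∈ c u ∧ u ∈ Odds G (c u)
  P6 : ∀ u, u ∉ O → lam u = MLabel.YZ → u ∈ c u ∧ u ∉ Odds G (c u)
  P7 : ∀ u, u ∉ O → lam u = MLabel.X → u ∈ Odds G (c u)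
  P8 : ∀ u, u ∉ O → lam u = MLabel.Z → u ∈ c u
  P9 : ∀ u, u ∉ O → lam u = MLabel.Y → Xor' (u ∈ c u) (u ∈ Odds G (c u))

/-- Focussing conditions (F1)-(F3). -/
def Focussed (G : SimpleGraph V) [DecidableRel G.Adj]
    (O : Finset V) (lam : V → MLabel) (c : V → Finset V) : Prop :=
  ∀ v, v ∉ O →
    (∀ w, w ∉ O → w ≠ v → w ∈ c v →
      lam w = MLabel.XY ∨ lam w = MLabel.X ∨ lam w = MLabel.Y) ∧
    (∀ w, w ∉ O → w ≠ v → w ∈ Odds G (c v) →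
      lam w = MLabel.XZ ∨ lam w = MLabel.YZ ∨ lam w = MLabel.Y ∨ lam w = MLabel.Z) ∧
    (∀ w, w ∉ O → w ≠ v → lam w = MLabel.Y → (w ∈ c v ↔ w ∈ Odds G (c v)))

/-- The reduced adjacency matrix over F₂: rows indexed by non-outputs, columns by non-inputs. -/
def redAdj (G : SimpleGraph V) [DecidableRel G.Adj] (I O : Finset V) :
    Matrix {v : V // v ∉ O} {v : V // v ∉ I} (ZMod 2) :=
  Matrix.of fun v u => if G.Adj v.val u.val then 1 else 0

/-- For a focussed Pauli flow on a labelled open graph with only Pauli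
measurements, the same correction function with the empty order is also a
(focussed) Pauli flow. -/
theorem focussed_pauli_flow_empty_order (G : SimpleGraph V) [DecidableRel G.Adj]
    (I O : Finset V) (lam : V → MLabel) (c : V → Finset V) (prec : V → V → Prop)
    (hlab : ∀ v, v ∉ O → lam v = MLabel.X ∨ lam v = MLabel.Y ∨ lam v = MLabel.Z)
    (h : PauliFlow G I O lam c prec) (hf : Focussed G O lam c) :
    PauliFlow G I O lam c (fun _ _ => False) ∧ Focussed G O lam c := by
  refine ⟨⟨fun u => id, fun _ _ _ h _ => h, h.csub, ?_, ?_, ?_, h.P4, h.P5, h.P6, h.P7, h.P8, h.P9⟩, hf⟩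
  · intro u hu v hv hvO hne hX hY
    rcases (hf u hu).1 v hvO (Ne.symm hne) hv with h1 | h1 | h1
    · rcases hlab v hvO with h2 | h2 | h2 <;> simp_all
    · exact hX h1
    · exact hY h1
  · intro u hu v hv hvO hne hY hZ
    rcases (hf u hu).2.1 v hvO (Ne.symm hne) hv with h1 | h1 | h1 | h1
    · rcases hlab v hvO with h2 | h2 | h2 <;> simp_all
    · rcases hlab v hvO with h2 | h2 | h2 <;> simp_all
    · exact hY h1
    · exact hZ h1
  · intro u hu v hvO _ hne hY
    exact (hf u hu).2.2 v hvO (Ne.symm hne) hY
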